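/- arXiv:math/0201246 — 3 statements merged into one kernel-verified Lean document; each statement's English description precedes it below -/
import Mathlib

section
/- Let p be a prime with p ≠ 5 and let k be a field of characteristic p. In R = k[x_0,x_1,x_2,x_3] take f = x_0^5 + x_1^5 + x_2^5 + x_3^5 and let 𝔇 be the associated relations submodule. Then there exists c ∈ k with c ≠ 0 such that x_0^{3p}·x_1^{4p}·x_2^{4p}·x_3^{4p} ≡ c · x_0^{3p mod 5}·x_1^{4p mod 5}·x_2^{4p mod 5}·x_3^{4p mod 5} (mod 𝔇). (This is the pole-order reduction of the Frobenius image of the basis vector of H^2(X,O_X) in the proof of Theorem 8.1: for p ≡ 1, 2, 3, 4 (mod 5) the target monomial has degree 15, 10, 10, 5 respectively, i.e. pole order 3, 2, 2, 1, which yields a(X) = 0, 1, 1, 2 for the Fermat quintic surface X ⊂ P^3.) -/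
/-!
Since `X i * ∂f/∂X i = d • X i ^ d` for the Fermat polynomial `f = ∑ X i ^ d`, the relation
`D_i (X i ^ a * r) = a • X i ^ a * r + d • X i ^ (a + d) * r` (for `r` free of `X i`) lowers the
exponent of `X i` by `d` at the cost of the scalar `-a / d`. Iterating in each variable brings
`x ^ w` down to `x ^ (w mod d)`, and the scalars met along the way, `-(w i mod d + d j) / d` with
`d j < w i`, are nonzero when `w i = m p` with `m < d` and `p ∤ d`: otherwise `p` would divide the
positive number `w i / d - j < p`.
-/

open MvPolynomial

/-- The operator `D_i(g) = x_i·(∂g/∂x_i) + x_i·(∂f/∂x_i)·g` associated to `f`. -/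
noncomputable def Dop {k : Type*} [Field k] {N : ℕ} (f : MvPolynomial (Fin N) k)
    (i : Fin N) (g : MvPolynomial (Fin N) k) : MvPolynomial (Fin N) k :=
  X i * pderiv i g + X i * pderiv i f * g

/-- The relations submodule `𝔇` associated to `f`: the `k`-linear span of
all the `D_i(g)` for `g` a polynomial and `i` an index. -/
noncomputable def relMod {k : Type*} [Field k] {N : ℕ} (f : MvPolynomial (Fin N) k) :
    Submodule k (MvPolynomial (Fin N) k) :=
  Submodule.span k {h | ∃ i g, h = Dop f i g}

namespace Dop

variable {k : Type*} [Field k] {N : ℕ}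

theorem mem_relMod (f : MvPolynomial (Fin N) k) (i : Fin N) (g : MvPolynomial (Fin N) k) :
    Dop f i g ∈ relMod f :=
  Submodule.subset_span ⟨i, g, rfl⟩

theorem X_pow_mul {f r : MvPolynomial (Fin N) k} {i : Fin N} {e : k} {d : ℕ}
    (hf : X i * pderiv i f = C e * X i ^ d) (hr : pderiv i r = 0) (a : ℕ) :
    Dop f i (X i ^ a * r) = (a : k) • (X i ^ a * r) + e • (X i ^ (a + d) * r) := by
  have hXa : X i * pderiv i (X i ^ a : MvPolynomial (Fin N) k) = C (a : k) * X i ^ a := by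
    cases a with
    | zero => simp
    | succ n =>
      rw [pderiv_pow, pderiv_X_self, Nat.add_sub_cancel, map_natCast]
      ring
  have hprod : X i * pderiv i f * (X i ^ a * r) = C e * (X i ^ (a + d) * r) := by
    rw [hf, pow_add]
    ring
  rw [Dop, hprod, pderiv_mul, hr, mul_zero, add_zero, ← mul_assoc, hXa, smul_eq_C_mul,
    smul_eq_C_mul]
  ring

end Dop

section Reduction

variable {k : Type*} [Field k] {N : ℕ} {f r : MvPolynomial (Fin N) k} {i : Fin N} {e : k}
  {d : ℕ}

theorem X_pow_add_mul_smodEq_relMod (hf : X i * pderiv i f = C e * X i ^ d) (he : e ≠ 0)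
    (hr : pderiv i r = 0) (a : ℕ) :
    X i ^ (a + d) * r ≡ (-(a : k) / e) • (X i ^ a * r) [SMOD relMod f] := by
  rw [SModEq.sub_mem]
  convert (relMod f).smul_mem e⁻¹ (Dop.mem_relMod f i (X i ^ a * r)) using 1
  rw [Dop.X_pow_mul hf hr, smul_add, smul_smul, smul_smul, inv_mul_cancel₀ he, one_smul,
    div_eq_inv_mul, mul_neg, neg_smul, sub_neg_eq_add, add_comm]

theorem exists_X_pow_add_mul_smodEq_relMod (hf : X i * pderiv i f = C e * X i ^ d)
    (he : e ≠ 0) (hr : pderiv i r = 0) (a n : ℕ)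
    (ha : ∀ j < n, ((a + d * j : ℕ) : k) ≠ 0) :
    ∃ c : k, c ≠ 0 ∧ X i ^ (a + d * n) * r ≡ c • (X i ^ a * r) [SMOD relMod f] := by
  induction n with
  | zero => exact ⟨1, one_ne_zero, by simp [SModEq.refl]⟩
  | succ n ih =>
    obtain ⟨c, hc, hmod⟩ := ih fun j hj => ha j (Nat.lt_succ_of_lt hj)
    have hstep := X_pow_add_mul_smodEq_relMod hf he hr (a + d * n)
    refine ⟨-((a + d * n : ℕ) : k) / e * c,
      mul_ne_zero (div_ne_zero (neg_ne_zero.mpr (ha n n.lt_succ_self)) he) hc, ?_⟩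
    rw [mul_add_one, ← add_assoc, mul_smul]
    exact hstep.trans (hmod.smul _)

end Reduction

section Fermat

variable {k : Type*} [Field k] {N : ℕ}

theorem X_mul_pderiv_sum_X_pow (d : ℕ) (i : Fin N) :
    X i * pderiv i (∑ j, X j ^ d : MvPolynomial (Fin N) k) = C (d : k) * X i ^ d := by
  rw [map_sum, Finset.sum_eq_single i (fun j _ hji => by simp [pderiv_X_of_ne hji])
    (by simp)]
  cases d with
  | zero => simp
  | succ n =>
    rw [pderiv_pow, pderiv_X_self, Nat.add_sub_cancel, map_natCast]
    ring

theorem pderiv_prod_X_pow_of_notMem {i : Fin N} (s : Finset (Fin N)) (hi : i ∉ s)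
    (e : Fin N → ℕ) :
    pderiv i (∏ j ∈ s, X j ^ e j : MvPolynomial (Fin N) k) = 0 :=
  Finset.prod_induction _ (fun q => pderiv i q = 0)
    (fun a b ha hb => by rw [pderiv_mul, ha, hb, mul_zero, zero_mul, add_zero])
    (by simp)
    (fun j hj => by simp [pderiv_X_of_ne (ne_of_mem_of_not_mem hj hi)])

theorem exists_prod_X_pow_smodEq_prod_X_pow_mod {d : ℕ} (hd : (d : k) ≠ 0) (e : Fin N → ℕ)
    (he : ∀ i, ∀ j < e i / d, ((e i % d + d * j : ℕ) : k) ≠ 0) :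
    ∃ c : k, c ≠ 0 ∧ ∏ i, X i ^ e i ≡ c • ∏ i, X i ^ (e i % d)
      [SMOD relMod (∑ i, X i ^ d : MvPolynomial (Fin N) k)] := by
  classical
  suffices ∀ s : Finset (Fin N), ∃ c : k, c ≠ 0 ∧
      ∏ i, X i ^ (if i ∈ s then e i else e i % d) ≡ c • ∏ i, X i ^ (e i % d)
        [SMOD relMod (∑ i, X i ^ d : MvPolynomial (Fin N) k)] by
    simpa using this Finset.univ
  intro s
  induction s using Finset.induction_on with
  | empty => exact ⟨1, one_ne_zero, by simp [SModEq.refl]⟩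
  | insert i s hi ih =>
    obtain ⟨c, hc, hmod⟩ := ih
    set r : MvPolynomial (Fin N) k :=
      ∏ j ∈ Finset.univ.erase i, X j ^ (if j ∈ s then e j else e j % d)
    have hr : pderiv i r = 0 := pderiv_prod_X_pow_of_notMem _ (Finset.notMem_erase i _) _
    have hprod (g : Fin N → ℕ) (hg : ∀ j ≠ i, g j = if j ∈ s then e j else e j % d) :
        ∏ j, X j ^ g j = X i ^ g i * r := by
      rw [← Finset.mul_prod_erase _ _ (Finset.mem_univ i)]
      exact congrArg _
        (Finset.prod_congr rfl fun j hj => by rw [hg j (Finset.ne_of_mem_erase hj)])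
    obtain ⟨c', hc', hmod'⟩ := exists_X_pow_add_mul_smodEq_relMod (X_mul_pderiv_sum_X_pow d i)
      hd hr (e i % d) (e i / d) (he i)
    refine ⟨c' * c, mul_ne_zero hc' hc, ?_⟩
    rw [hprod _ fun j hj => by simp [hj], if_pos (Finset.mem_insert_self i s), mul_smul,
      ← Nat.mod_add_div (e i) d]
    refine hmod'.trans ?_
    have hold := hprod (fun j => if j ∈ s then e j else e j % d) fun _ _ => rfl
    rw [if_neg hi] at hold
    rw [← hold]
    exact hmod.smul c'

end Fermat

theorem natCast_mul_mod_add_mul_ne_zero {k : Type*} [Field k] {p d m : ℕ} [CharP k p]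
    (hp : p.Prime) (hpd : ¬p ∣ d) (hm : m < d) :
    ∀ j < m * p / d, ((m * p % d + d * j : ℕ) : k) ≠ 0 := by
  intro j hj hzero
  rw [CharP.cast_eq_zero_iff k p] at hzero
  have hdvd : p ∣ d * (m * p / d - j) := by
    have heq : d * (m * p / d - j) = m * p - (m * p % d + d * j) := by
      have := Nat.mod_add_div (m * p) d
      rw [Nat.mul_sub]
      omega
    rw [heq]
    exact Nat.dvd_sub (dvd_mul_left p m) hzero
  have hlt : m * p / d < p :=
    (Nat.div_lt_iff_lt_mul (by omega)).mpr
      (by rw [mul_comm p]; exact Nat.mul_lt_mul_of_pos_right hm hp.pos)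
  have := Nat.le_of_dvd (by omega) ((Nat.Prime.coprime_iff_not_dvd hp).mpr hpd
    |>.dvd_of_dvd_mul_left hdvd)
  omega

theorem exists_prod_X_pow_mul_char_smodEq {k : Type*} [Field k] {N p d : ℕ} [CharP k p]
    (hp : p.Prime) (hpd : ¬p ∣ d) (e : Fin N → ℕ) (he : ∀ i, e i < d) :
    ∃ c : k, c ≠ 0 ∧ ∏ i, X i ^ (e i * p) ≡ c • ∏ i, X i ^ (e i * p % d)
      [SMOD relMod (∑ i, X i ^ d : MvPolynomial (Fin N) k)] :=
  exists_prod_X_pow_smodEq_prod_X_pow_mod (by rwa [Ne, CharP.cast_eq_zero_iff k p])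
    (fun i => e i * p) fun i => natCast_mul_mod_add_mul_ne_zero hp hpd (he i)

/-- For the Fermat quintic surface `x_0^5+x_1^5+x_2^5+x_3^5 = 0` in characteristic
`p ≠ 5`, the Frobenius image monomial `x_0^{3p} x_1^{4p} x_2^{4p} x_3^{4p}` is
congruent mod `𝔇` to a nonzero multiple of
`x_0^{3p mod 5} x_1^{4p mod 5} x_2^{4p mod 5} x_3^{4p mod 5}`. -/
theorem stmt0 (p : ℕ) (hp : p.Prime) (hp5 : p ≠ 5)
    (k : Type*) [Field k] [CharP k p] :
    ∃ c : k, c ≠ 0 ∧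
      (X 0 ^ (3 * p) * X 1 ^ (4 * p) * X 2 ^ (4 * p) * X 3 ^ (4 * p)
        - C c * (X 0 ^ (3 * p % 5) * X 1 ^ (4 * p % 5) * X 2 ^ (4 * p % 5)
            * X 3 ^ (4 * p % 5)))
        ∈ relMod (X 0 ^ 5 + X 1 ^ 5 + X 2 ^ 5 + X 3 ^ 5 : MvPolynomial (Fin 4) k) := by
  have hpd : ¬p ∣ 5 := fun h => hp5 ((Nat.prime_dvd_prime_iff_eq hp Nat.prime_five).mp h)
  obtain ⟨c, hc, hmod⟩ := exists_prod_X_pow_mul_char_smodEq (k := k) hp hpd ![3, 4, 4, 4]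
    (by decide)
  refine ⟨c, hc, ?_⟩
  rw [SModEq.sub_mem, Fin.sum_univ_four, Fin.prod_univ_four, Fin.prod_univ_four] at hmod
  simpa [smul_eq_C_mul, mul_assoc] using hmod
end

section
/- Let p be a prime with p ≠ 5, and let H ∈ 𝔽_p[X] be the Hasse–Witt polynomial H = Σ_{m=0}^{⌊(p−1)/5⌋} ((5m)!/(m!)^5 mod p) · X^{p−1−5m}. Then the multiplicity of 0 as a root of H is zero (equivalently, the constant coefficient of H is nonzero, i.e. the Fermat quintic threefold X_0 has a(X_0) = 0 and is ordinary) if and only if p ≡ 1 (mod 5). (The 'if' direction uses that for m = (p−1)/5 the coefficient (p−1)!/(((p−1)/5)!)^5 is a unit modulo p, e.g. by Wilson's theorem (p−1)! ≡ −1 (mod p).) -/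
/-! Only the term with `5m = p - 1` contributes to the constant coefficient of `H`, so `H(0) = 0`
unless `5 ∣ p - 1`. In that case `H(0)` is the multinomial coefficient `(p-1)!/(((p-1)/5)!)^5`,
a quotient of `(p-1)!`, which is prime to `p`. Since the `X^(p-1)` coefficient of `H` is `1`, `H ≠ 0`,
so `0` is a root of multiplicity zero exactly when `H(0) ≠ 0`. -/

/-- The Hasse–Witt polynomial of the Dwork quintic family in characteristic `p`:
`H = Σ_{m=0}^{⌊(p−1)/5⌋} ((5m)!/(m!)^5 mod p) · X^{p−1−5m}` in `𝔽_p[X]`. -/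
noncomputable def hasseWittQuintic (p : ℕ) : Polynomial (ZMod p) :=
  ∑ m ∈ Finset.range ((p - 1) / 5 + 1),
    Polynomial.C (((5 * m).factorial / m.factorial ^ 5 : ℕ) : ZMod p) *
      Polynomial.X ^ (p - 1 - 5 * m)

open Polynomial Nat

lemma factorial_pow_dvd_factorial_mul (k m : ℕ) : m ! ^ k ∣ (k * m)! := by
  simpa using Nat.prod_factorial_dvd_factorial_sum (Finset.range k) (fun _ => m)

lemma cast_factorial_div_ne_zero {p n d : ℕ} (hp : p.Prime) (hn : n < p) (hd : d ∣ n !) :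
    ((n ! / d : ℕ) : ZMod p) ≠ 0 := by
  rw [Ne, ZMod.natCast_eq_zero_iff]
  intro h
  exact absurd (hp.dvd_factorial.mp (h.trans (Nat.div_dvd_of_dvd hd))) (by omega)

lemma hasseWittQuintic_coeff (p k : ℕ) : (hasseWittQuintic p).coeff k =
    ∑ m ∈ Finset.range ((p - 1) / 5 + 1),
      if k = p - 1 - 5 * m then (((5 * m)! / m ! ^ 5 : ℕ) : ZMod p) else 0 := by
  simp [hasseWittQuintic, coeff_X_pow, mul_ite]

lemma hasseWittQuintic_coeff_sub_one (p : ℕ) : (hasseWittQuintic p).coeff (p - 1) = 1 := by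
  rw [hasseWittQuintic_coeff, Finset.sum_eq_single_of_mem 0 (by simp)]
  · simp
  · intro m hm hm0
    rw [Finset.mem_range] at hm
    rw [if_neg (by omega)]

lemma hasseWittQuintic_coeff_zero {p : ℕ} (hp : 0 < p) :
    (hasseWittQuintic p).coeff 0 =
      if p % 5 = 1 then (((p - 1)! / ((p - 1) / 5)! ^ 5 : ℕ) : ZMod p) else 0 := by
  rw [hasseWittQuintic_coeff]
  split_ifs with h
  · rw [Finset.sum_eq_single_of_mem ((p - 1) / 5) (by simp)]
    · rw [if_pos (by omega), show 5 * ((p - 1) / 5) = p - 1 by omega]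
    · intro m hm hm'
      rw [Finset.mem_range] at hm
      rw [if_neg (by omega)]
  · refine Finset.sum_eq_zero fun m hm => ?_
    rw [Finset.mem_range] at hm
    rw [if_neg (by omega)]

theorem stmt5_general (p : ℕ) (hp : p.Prime) :
    (hasseWittQuintic p).rootMultiplicity 0 = 0 ↔ p % 5 = 1 := by
  have := Fact.mk hp
  have hne : hasseWittQuintic p ≠ 0 := fun h => by
    simpa [h] using hasseWittQuintic_coeff_sub_one p
  rw [← Nat.le_zero, ← not_lt, rootMultiplicity_pos hne, IsRoot, ← coeff_zero_eq_eval_zero,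
    hasseWittQuintic_coeff_zero hp.pos]
  split_ifs with h
  · have hdvd : ((p - 1) / 5)! ^ 5 ∣ (p - 1)! := by
      simpa [show 5 * ((p - 1) / 5) = p - 1 by omega] using
        factorial_pow_dvd_factorial_mul 5 ((p - 1) / 5)
    simpa [h] using cast_factorial_div_ne_zero hp (by omega) hdvd
  · simp [h]

/-- For `p ≠ 5` prime, the Hasse–Witt polynomial `H` of the Dwork quintic family
has `rootMultiplicity 0 H = 0` (i.e. the Fermat quintic threefold `X_0` has
`a(X_0) = 0` and is ordinary) if and only if `p ≡ 1 (mod 5)`. -/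
theorem stmt5 (p : ℕ) (hp : p.Prime) (hp5 : p ≠ 5) :
    (hasseWittQuintic p).rootMultiplicity 0 = 0 ↔ p % 5 = 1 :=
  stmt5_general p hp
end

section
/- Let k be a field, V a finite-dimensional k-vector space, and V₁, V₂ subspaces with V = V₁ ⊕ V₂ (internal direct sum) and dim V₁ = dim V₂ = g with g ≥ 1. For a natural number r with r ≤ g, let F^r ⊆ ⋀^g V be the k-span of all wedges v₁ ∧ ⋯ ∧ v_g of vectors v₁, …, v_g ∈ V such that v₁, …, v_r ∈ V₁. Let W ⊆ V be a subspace with dim W = g and set a = dim(W ∩ V₁). Then the image of ⋀^g W in ⋀^g V under the map induced by the inclusion W ↪ V is contained in F^a, and if a < g this image is not contained in F^{a+1}; that is, a = max{ r ≤ g : the image of ⋀^g W lies in F^r }. (This is the linear-algebra core of Proposition 6.1: applied to V = H¹_dR(X) of a g-dimensional abelian variety X, V₁ = H⁰(X,Ω¹), and W = F(H¹(X,O_X)), it shows that the two notions of a-number coincide, since F^• is the Hodge filtration on H^g_dR(X) = ⋀^g H¹_dR(X) and W ∩ V₁ = H⁰(X, B₁Ω¹_X).) -/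
/-!
The image of `⋀^g W` is the line spanned by `w₁ ∧ ⋯ ∧ w_g` for any basis of `W`; choosing the
basis so that `w₁, …, w_a` span `W ∩ V₁` puts it in `F^a`. Conversely, project `V` onto `W` along
a complement of `W` that contains a complement of `W ∩ V₁` in `V₁`: this retraction `L` maps `V₁`
into the `a`-dimensional `W ∩ V₁`, so `⋀^g L` kills every generator of `F^{a+1}`, while it is the
identity on the nonzero image of `⋀^g W`.
-/

open ExteriorAlgebra Module

theorem AlternatingMap.apply_eq_basis_det_smul {R M N ι : Type*} [CommRing R] [AddCommGroup M]
    [Module R M] [AddCommGroup N] [Module R N] [Fintype ι] [DecidableEq ι]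
    (e : Basis ι R M) (f : M [⋀^ι]→ₗ[R] N) (v : ι → M) : f v = e.det v • f e := by
  have hf : f = e.det.smulRight (f e) := e.ext_alternating fun i hi => by
    let σ : Equiv.Perm ι := Equiv.ofBijective i (Finite.injective_iff_bijective.1 hi)
    change f (e ∘ σ) = e.det.smulRight (f e) (e ∘ σ)
    simp [AlternatingMap.map_perm, Basis.det_self]
  exact congr($hf v)

section Basis

variable {R M N : Type*} [CommRing R] [AddCommGroup M] [Module R M] [AddCommGroup N]
  [Module R N] {n : ℕ}

theorem ExteriorAlgebra.exteriorPower_eq_span_ιMulti_basis (e : Basis (Fin n) R M) :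
    ⋀[R]^n M = R ∙ ιMulti R n e := by
  rw [← ιMulti_span_fixedDegree]
  refine le_antisymm (Submodule.span_le.mpr ?_) ((Submodule.span_singleton_le_iff_mem _ _).mpr
    (Submodule.subset_span ⟨e, rfl⟩))
  rintro _ ⟨v, rfl⟩
  rw [(ιMulti R n).apply_eq_basis_det_smul e v]
  exact Submodule.smul_mem _ _ (Submodule.mem_span_singleton_self _)

theorem ExteriorAlgebra.map_exteriorPower_eq_span_ιMulti_basis (e : Basis (Fin n) R M)
    (f : M →ₗ[R] N) :
    (⋀[R]^n M).map (ExteriorAlgebra.map f).toLinearMap = R ∙ ιMulti R n (f ∘ e) := by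
  rw [exteriorPower_eq_span_ιMulti_basis e, Submodule.map_span, Set.image_singleton,
    AlgHom.toLinearMap_apply, map_apply_ιMulti]

theorem ExteriorAlgebra.ιMulti_basis_ne_zero [Nontrivial R] (e : Basis (Fin n) R M) :
    ιMulti R n e ≠ 0 := by
  intro h
  have := congr(liftAlternating (Function.update 0 n e.det) $h)
  simp [liftAlternating_apply_ιMulti, Basis.det_self] at this

end Basis

section Field

variable {k M : Type*} [Field k] [AddCommGroup M] [Module k M]

theorem ExteriorAlgebra.ιMulti_eq_zero_of_finrank_lt [FiniteDimensional k M] {P : Submodule k M}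
    {n r : ℕ} (hrn : r ≤ n) (hP : finrank k P < r) {v : Fin n → M}
    (hv : ∀ i : Fin n, (i : ℕ) < r → v i ∈ P) : ιMulti k n v = 0 := by
  refine AlternatingMap.map_linearDependent _ _ fun hli => hP.not_ge ?_
  have : LinearIndependent k fun j : Fin r => (⟨v (Fin.castLE hrn j), hv _ j.isLt⟩ : P) :=
    LinearIndependent.of_comp P.subtype (hli.comp _ (Fin.castLE_injective hrn))
  simpa using this.fintype_card_le_finrank

theorem Submodule.exists_finBasis_initial_mem [FiniteDimensional k M] (P : Submodule k M)
    {a n : ℕ} (hP : finrank k P = a) (hM : finrank k M = n) :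
    ∃ e : Basis (Fin n) k M, ∀ i : Fin n, (i : ℕ) < a → e i ∈ P := by
  obtain ⟨U, hU⟩ := P.exists_isCompl
  have hn : a + finrank k U = n := by rw [← hP, Submodule.finrank_add_eq_of_isCompl hU, hM]
  let e := (((finBasisOfFinrankEq k P hP).prod (finBasisOfFinrankEq k U rfl)).map
    (P.prodEquivOfIsCompl U hU)).reindex (finSumFinEquiv.trans (finCongr hn))
  refine ⟨e, fun i hi => ?_⟩
  have hidx : (finSumFinEquiv.trans (finCongr hn)).symm i = Sum.inl ⟨i, hi⟩ :=
    (Equiv.symm_apply_eq _).mpr rfl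
  rw [Basis.reindex_apply, hidx, Basis.map_apply, Basis.prod_apply]
  simp

theorem Submodule.exists_retraction_mapsTo_comap (W V₁ : Submodule k M) :
    ∃ L : M →ₗ[k] W, L ∘ₗ W.subtype = LinearMap.id ∧ ∀ v ∈ V₁, L v ∈ V₁.comap W.subtype := by
  obtain ⟨C, hdisj, hsup⟩ :=
    IsModularLattice.exists_disjoint_and_sup_eq (inf_le_right : W ⊓ V₁ ≤ V₁)
  have hCW : Disjoint C W := by
    have hC : C ≤ V₁ := hsup ▸ le_sup_right
    refine disjoint_iff_inf_le.mpr (le_trans ?_ hdisj.eq_bot.le)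
    exact le_inf (le_inf inf_le_right (inf_le_left.trans hC)) inf_le_left
  obtain ⟨K, hCK, hKW⟩ := hCW.exists_isCompl
  refine ⟨W.projectionOnto K hKW.symm, LinearMap.ext fun w => projectionOnto_apply_left _ w,
    fun v hv => ?_⟩
  rw [← hsup] at hv
  obtain ⟨w, hw, c, hc, rfl⟩ := Submodule.mem_sup.mp hv
  rw [map_add, projectionOnto_apply_of_mem_right _ (hCK hc), add_zero,
    projectionOnto_apply_left _ ⟨w, hw.1⟩]
  exact hw.2

end Field

theorem stmt6_general (k : Type*) [Field k] (V : Type*) [AddCommGroup V] [Module k V]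
    [FiniteDimensional k V] (g : ℕ)
    (V₁ : Submodule k V)
    (F : ℕ → Submodule k (ExteriorAlgebra k V))
    (hF : ∀ r : ℕ, F r = Submodule.span k
      {x | ∃ v : Fin g → V, (∀ i : Fin g, (i : ℕ) < r → v i ∈ V₁) ∧ x = ιMulti k g v})
    (W : Submodule k V) (hW : Module.finrank k W = g)
    (a : ℕ) (ha : a = Module.finrank k (W ⊓ V₁ : Submodule k V)) :
    Submodule.map (ExteriorAlgebra.map W.subtype).toLinearMap (⋀[k]^g (↥W)) ≤ F a ∧
    (a < g →
      ¬ Submodule.map (ExteriorAlgebra.map W.subtype).toLinearMap (⋀[k]^g (↥W))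
          ≤ F (a + 1)) := by
  have hP : finrank k (V₁.comap W.subtype) = a := by
    rw [ha, ← (Submodule.comapSubtypeEquivOfLe inf_le_left).finrank_eq, Submodule.comap_inf,
      Submodule.comap_subtype_self, top_inf_eq]
  obtain ⟨e, he⟩ := (V₁.comap W.subtype).exists_finBasis_initial_mem hP hW
  rw [map_exteriorPower_eq_span_ιMulti_basis e]
  refine ⟨(Submodule.span_singleton_le_iff_mem _ _).mpr ?_, fun hlt hle => ?_⟩
  · rw [hF]
    exact Submodule.subset_span ⟨_, he, rfl⟩
  obtain ⟨L, hLW, hLV₁⟩ := W.exists_retraction_mapsTo_comap V₁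
  have hker : F (a + 1) ≤ LinearMap.ker (ExteriorAlgebra.map L).toLinearMap := by
    rw [hF, Submodule.span_le]
    rintro _ ⟨v, hv, rfl⟩
    rw [SetLike.mem_coe, LinearMap.mem_ker, AlgHom.toLinearMap_apply, map_apply_ιMulti]
    exact ιMulti_eq_zero_of_finrank_lt hlt (hP ▸ lt_add_one a) fun i hi => hLV₁ _ (hv i hi)
  have hwedge := hker ((Submodule.span_singleton_le_iff_mem _ _).mp hle)
  rw [LinearMap.mem_ker, AlgHom.toLinearMap_apply, map_apply_ιMulti, ← Function.comp_assoc,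
    ← LinearMap.coe_comp, hLW, LinearMap.id_coe, Function.id_comp] at hwedge
  exact ιMulti_basis_ne_zero e hwedge

/-- Linear-algebra core of Proposition 6.1. `V = V₁ ⊕ V₂` with `dim V₁ = dim V₂ = g ≥ 1`,
`F^r ⊆ ⋀^g V` is the span of the pure wedges `v₁ ∧ ⋯ ∧ v_g` with `v₁, …, v_r ∈ V₁`,
and `W ⊆ V` is a `g`-dimensional subspace with `a = dim (W ∩ V₁)`. Then the image of
`⋀^g W` in `⋀^g V` (under the map induced by the inclusion `W ↪ V`) is contained in
`F^a` but, if `a < g`, not in `F^{a+1}`. -/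
theorem stmt6 (k : Type*) [Field k] (V : Type*) [AddCommGroup V] [Module k V]
    [FiniteDimensional k V] (g : ℕ) (hg : 1 ≤ g)
    (V₁ V₂ : Submodule k V) (hcompl : IsCompl V₁ V₂)
    (h1 : Module.finrank k V₁ = g) (h2 : Module.finrank k V₂ = g)
    (F : ℕ → Submodule k (ExteriorAlgebra k V))
    (hF : ∀ r : ℕ, F r = Submodule.span k
      {x | ∃ v : Fin g → V, (∀ i : Fin g, (i : ℕ) < r → v i ∈ V₁) ∧ x = ιMulti k g v})
    (W : Submodule k V) (hW : Module.finrank k W = g)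
    (a : ℕ) (ha : a = Module.finrank k (W ⊓ V₁ : Submodule k V)) :
    Submodule.map (ExteriorAlgebra.map W.subtype).toLinearMap (⋀[k]^g (↥W)) ≤ F a ∧
    (a < g →
      ¬ Submodule.map (ExteriorAlgebra.map W.subtype).toLinearMap (⋀[k]^g (↥W))
          ≤ F (a + 1)) :=
  stmt6_general k V g V₁ F hF W hW a ha
end
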